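/- Let λ* ∈ arg inf_{λ∈ℝ^T} P(λ) and let α = m/K ∈ (0,1]. Then there exists a Markov (randomized) policy π** for the sub-MDP that is optimal for Q(λ*) (i.e., E^{π**}[∑_{t=1}^T (r_t(S_t,A_t) − λ*_t A_t)] = Q(λ*)) and satisfies E^{π**}[A_t] = α for every 1 ≤ t ≤ T. -/
import Mathlib


open Finset

namespace RMAB

/-- Numeric value of an action: the active action `true` counts as `1`. -/
def actVal (a : Bool) : ℝ := if a then 1 else 0

section Core

variable {σ β : Type*} [Fintype σ] [Fintype β] [DecidableEq σ]

/-- A (randomized) Markov policy: `π s a t` is the probability of taking action `a`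
in state `s` at time `t`. -/
def IsPolicy (π : σ → β → ℕ → ℝ) : Prop :=
  (∀ s a t, 0 ≤ π s a t) ∧ ∀ s t, ∑ a : β, π s a t = 1

/-- A transition kernel: `P a s s'` is the probability of moving from `s` to `s'`
when action `a` is taken. -/
def IsKernel (P : β → σ → σ → ℝ) : Prop :=
  (∀ a s s', 0 ≤ P a s s') ∧ ∀ a s, ∑ s' : σ, P a s s' = 1

/-- `saDist P init π t s a` is the probability, under the Markov policy `π` started at
`init`, that at time `t` (1-indexed) the process is in state `s` and takes action `a`. -/
noncomputable def saDist (P : β → σ → σ → ℝ) (init : σ) (π : σ → β → ℕ → ℝ) :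
    ℕ → σ → β → ℝ
  | 0 => fun _ _ => 0
  | 1 => fun s a => (if s = init then (1 : ℝ) else 0) * π s a 1
  | (t + 2) => fun s a =>
      (∑ s' : σ, ∑ a' : β, saDist P init π (t + 1) s' a' * P a' s' s) * π s a (t + 2)

/-- Expected value of `∑_{t=1}^T f t S_t A_t` under the Markov policy `π` started at `init`. -/
noncomputable def expVal (P : β → σ → σ → ℝ) (init : σ) (π : σ → β → ℕ → ℝ)
    (T : ℕ) (f : ℕ → σ → β → ℝ) : ℝ :=
  ∑ t ∈ Finset.Icc 1 T, ∑ s : σ, ∑ a : β, saDist P init π t s a * f t s a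

end Core

section Sub

variable {S : Type*} [Fintype S] [DecidableEq S]

/-- Value of a policy in the sub-MDP with Lagrange penalty `lam t` for the active action. -/
noncomputable def subValue (P : Bool → S → S → ℝ) (s1 : S) (r : ℕ → S → Bool → ℝ)
    (lam : ℕ → ℝ) (T : ℕ) (π : S → Bool → ℕ → ℝ) : ℝ :=
  expVal P s1 π T fun t s a => r t s a - lam t * actVal a

/-- `Q(λ)`: the optimal value of the penalized sub-MDP. -/
noncomputable def Qval (P : Bool → S → S → ℝ) (s1 : S) (r : ℕ → S → Bool → ℝ)
    (T : ℕ) (lam : ℕ → ℝ) : ℝ :=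
  sSup {v | ∃ π : S → Bool → ℕ → ℝ, IsPolicy π ∧ v = subValue P s1 r lam T π}

/-- The transition kernel of the original MDP: `K` arms evolving independently. -/
def jointKernel (P : Bool → S → S → ℝ) (K : ℕ) :
    (Fin K → Bool) → (Fin K → S) → (Fin K → S) → ℝ :=
  fun a s s' => ∏ x, P (a x) (s x) (s' x)

/-- The reward of the original MDP: the sum of the arms' rewards. -/
def jointReward (r : ℕ → S → Bool → ℝ) (K : ℕ) :
    ℕ → (Fin K → S) → (Fin K → Bool) → ℝ :=
  fun t s a => ∑ x, r t (s x) (a x)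

/-- `|a|`: the number of active arms of a joint action. -/
def numActive {K : ℕ} (a : Fin K → Bool) : ℝ := ∑ x, actVal (a x)

/-- Expected total reward of a joint Markov policy in the original MDP with `K` arms,
all started at `s1`. -/
noncomputable def jointValue (P : Bool → S → S → ℝ) (s1 : S) (r : ℕ → S → Bool → ℝ)
    (T K : ℕ) (πb : (Fin K → S) → (Fin K → Bool) → ℕ → ℝ) : ℝ :=
  expVal (jointKernel P K) (fun _ => s1) πb T (jointReward r K)

/-- The Lagrangian relaxation value `P(λ)`: the supremum over all joint Markov policies of
the expected total reward minus the penalty `∑_t λ_t (|A_t| − m)`. -/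
noncomputable def lagrangeValue (P : Bool → S → S → ℝ) (s1 : S) (r : ℕ → S → Bool → ℝ)
    (T K m : ℕ) (lam : ℕ → ℝ) : ℝ :=
  sSup {v | ∃ πb : (Fin K → S) → (Fin K → Bool) → ℕ → ℝ, IsPolicy πb ∧
    v = expVal (jointKernel P K) (fun _ => s1) πb T
      (fun t s a => jointReward r K t s a - lam t * (numActive a - (m : ℝ)))}

/-- A joint Markov policy is feasible if it activates exactly `m` arms in every period
with probability one. -/
def Feasible (P : Bool → S → S → ℝ) (s1 : S) (T K m : ℕ)
    (πb : (Fin K → S) → (Fin K → Bool) → ℕ → ℝ) : Prop :=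
  IsPolicy πb ∧ ∀ t ∈ Finset.Icc 1 T, ∀ s a, numActive a ≠ (m : ℝ) →
    saDist (jointKernel P K) (fun _ => s1) πb t s a = 0

end Sub

end RMAB
namespace RMAB

section CoreAux
variable {σ β : Type*} [Fintype σ] [Fintype β] [DecidableEq σ]
set_option linter.unusedSectionVars false
set_option linter.unusedVariables false

variable {P : β → σ → σ → ℝ} {init : σ} {π : σ → β → ℕ → ℝ}

lemma saDist_nonneg (hP : IsKernel P) (hπ : IsPolicy π) :
    ∀ t s a, 0 ≤ saDist P init π t s a := by
  intro t
  induction t using Nat.strong_induction_on with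
  | _ t ih =>
    match t with
    | 0 => intro s a; simp [saDist]
    | 1 =>
      intro s a; unfold saDist
      apply mul_nonneg (by positivity) (hπ.1 _ _ _)
    | (n+2) =>
      intro s a; unfold saDist
      apply mul_nonneg _ (hπ.1 _ _ _)
      apply Finset.sum_nonneg; intro s' _
      apply Finset.sum_nonneg; intro a' _
      exact mul_nonneg (ih (n+1) (by omega) s' a') (hP.1 _ _ _)

lemma saDist_mass (hP : IsKernel P) (hπ : IsPolicy π) :
    ∀ t, 1 ≤ t → ∑ s : σ, ∑ a : β, saDist P init π t s a = 1 := by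
  intro t
  induction t using Nat.strong_induction_on with
  | _ t ih =>
    match t with
    | 0 => omega
    | 1 =>
      intro _; unfold saDist
      simp only [← Finset.mul_sum, hπ.2]
      simp
    | (n+2) =>
      intro _
      unfold saDist
      simp only [← Finset.mul_sum, hπ.2, mul_one]
      rw [Finset.sum_comm]
      rw [Finset.sum_congr rfl (fun s' _ => ((Finset.sum_comm) :
        ∑ s : σ, ∑ a' : β, saDist P init π (n+1) s' a' * P a' s' s
          = ∑ a' : β, ∑ s : σ, saDist P init π (n+1) s' a' * P a' s' s))]
      simp only [← Finset.mul_sum, hP.2, mul_one]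
      exact ih (n+1) (by omega) (by omega)
lemma saDist_le_one (hP : IsKernel P) (hπ : IsPolicy π) {t : ℕ} (ht : 1 ≤ t) (s : σ) (a : β) :
    saDist P init π t s a ≤ 1 := by
  calc saDist P init π t s a ≤ ∑ a' : β, saDist P init π t s a' :=
        Finset.single_le_sum (fun a' _ => saDist_nonneg hP hπ t s a') (Finset.mem_univ a)
    _ ≤ ∑ s' : σ, ∑ a' : β, saDist P init π t s' a' :=
        Finset.single_le_sum (fun s' _ => Finset.sum_nonneg fun a' _ => saDist_nonneg hP hπ t s' a')
          (Finset.mem_univ s)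
    _ = 1 := saDist_mass hP hπ t ht

/-- Linear value functional on (truncated) occupation measures. -/
noncomputable def sval (T : ℕ) (μ : ℕ → σ → β → ℝ) (f : ℕ → σ → β → ℝ) : ℝ :=
  ∑ t ∈ Finset.Icc 1 T, ∑ s : σ, ∑ a : β, μ t s a * f t s a

lemma expVal_eq_sval (T : ℕ) (f : ℕ → σ → β → ℝ) :
    expVal P init π T f = sval T (saDist P init π) f := rfl

/-- Truncated occupation measure property. -/
def IsOccT (P : β → σ → σ → ℝ) (init : σ) (T : ℕ) (μ : ℕ → σ → β → ℝ) : Prop :=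
  (∀ t s a, 0 ≤ μ t s a)
  ∧ (∀ t, (t = 0 ∨ T < t) → ∀ s a, μ t s a = 0)
  ∧ (1 ≤ T → ∀ s, ∑ a : β, μ 1 s a = if s = init then 1 else 0)
  ∧ (∀ t, 1 ≤ t → t + 1 ≤ T → ∀ s,
      ∑ a : β, μ (t+1) s a = ∑ s' : σ, ∑ a' : β, μ t s' a' * P a' s' s)

def trunc (T : ℕ) (μ : ℕ → σ → β → ℝ) : ℕ → σ → β → ℝ :=
  fun t => if 1 ≤ t ∧ t ≤ T then μ t else fun _ _ => 0

omit [DecidableEq σ] in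
lemma sval_trunc (T : ℕ) (μ f : ℕ → σ → β → ℝ) : sval T (trunc T μ) f = sval T μ f := by
  apply Finset.sum_congr rfl
  intro t ht
  rw [Finset.mem_Icc] at ht
  simp [trunc, ht.1, ht.2]

lemma isOccT_trunc_saDist (hP : IsKernel P) (hπ : IsPolicy π) (T : ℕ) :
    IsOccT P init T (trunc T (saDist P init π)) := by
  refine ⟨?_, ?_, ?_, ?_⟩
  · intro t s a
    unfold trunc
    split
    · exact saDist_nonneg hP hπ t s a
    · exact le_refl 0
  · intro t ht s a
    unfold trunc
    rw [if_neg (by omega)]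
  · intro hT s
    unfold trunc
    rw [if_pos (by omega)]
    unfold saDist
    rw [← Finset.mul_sum, hπ.2, mul_one]
  · intro t ht ht2 s
    unfold trunc
    rw [if_pos (by omega), if_pos (by omega)]
    match t, ht with
    | (n+1), _ =>
      have hdef : ∀ s a, saDist P init π (n+2) s a
          = (∑ s' : σ, ∑ a' : β, saDist P init π (n+1) s' a' * P a' s' s) * π s a (n+2) :=
        fun _ _ => rfl
      show ∑ a : β, saDist P init π (n+2) s a = _
      rw [Finset.sum_congr rfl (fun a _ => hdef s a), ← Finset.mul_sum, hπ.2, mul_one]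

lemma occ_mass {T : ℕ} {μ : ℕ → σ → β → ℝ} (hP : IsKernel P) (hμ : IsOccT P init T μ) :
    ∀ t, 1 ≤ t → t ≤ T → ∑ s : σ, ∑ a : β, μ t s a = 1 := by
  intro t
  induction t using Nat.strong_induction_on with
  | _ t ih =>
    match t with
    | 0 => omega
    | 1 =>
      intro _ h1T
      rw [Finset.sum_congr rfl (fun s _ => hμ.2.2.1 h1T s)]
      simp
    | (n+2) =>
      intro _ hT
      rw [Finset.sum_congr rfl (fun s _ => hμ.2.2.2 (n+1) (by omega) (by omega) s)]
      rw [Finset.sum_comm]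
      rw [Finset.sum_congr rfl (fun s' _ => ((Finset.sum_comm) :
        ∑ s : σ, ∑ a' : β, μ (n+1) s' a' * P a' s' s
          = ∑ a' : β, ∑ s : σ, μ (n+1) s' a' * P a' s' s))]
      simp only [← Finset.mul_sum, hP.2, mul_one]
      exact ih (n+1) (by omega) (by omega) (by omega)

lemma occ_le_one {T : ℕ} {μ : ℕ → σ → β → ℝ} (hP : IsKernel P) (hμ : IsOccT P init T μ)
    {t : ℕ} (ht : 1 ≤ t) (htT : t ≤ T) (s : σ) (a : β) : μ t s a ≤ 1 := by
  calc μ t s a ≤ ∑ a' : β, μ t s a' :=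
        Finset.single_le_sum (fun a' _ => hμ.1 t s a') (Finset.mem_univ a)
    _ ≤ ∑ s' : σ, ∑ a' : β, μ t s' a' :=
        Finset.single_le_sum (fun s' _ => Finset.sum_nonneg fun a' _ => hμ.1 t s' a')
          (Finset.mem_univ s)
    _ = 1 := occ_mass hP hμ t ht htT

open Classical in
noncomputable def occPolicy [Inhabited β] (μ : ℕ → σ → β → ℝ) : σ → β → ℕ → ℝ :=
  fun s a t => if 0 < ∑ a' : β, μ t s a' then μ t s a / ∑ a' : β, μ t s a'
    else if a = default then 1 else 0

lemma isPolicy_occPolicy [Inhabited β] {μ : ℕ → σ → β → ℝ} (hμ0 : ∀ t s a, 0 ≤ μ t s a) :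
    IsPolicy (occPolicy μ) := by
  constructor
  · intro s a t
    unfold occPolicy
    split
    · exact div_nonneg (hμ0 t s a) (le_of_lt (by assumption))
    · split <;> norm_num
  · intro s t
    unfold occPolicy
    by_cases h : 0 < ∑ a' : β, μ t s a'
    · rw [Finset.sum_congr rfl (fun a _ => if_pos h), ← Finset.sum_div,
        div_self (ne_of_gt h)]
    · rw [Finset.sum_congr rfl (fun a _ => if_neg h)]
      rw [Finset.sum_eq_single default (fun b _ hb => if_neg hb)
        (fun h => absurd (Finset.mem_univ _) h), if_pos rfl]

lemma exists_policy_of_isOccT [Inhabited β] {T : ℕ} {μ : ℕ → σ → β → ℝ}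
    (hP : IsKernel P) (hμ : IsOccT P init T μ) :
    ∃ π : σ → β → ℕ → ℝ, IsPolicy π ∧
      ∀ t, 1 ≤ t → t ≤ T → ∀ s a, saDist P init π t s a = μ t s a := by
  classical
  refine ⟨occPolicy μ, isPolicy_occPolicy hμ.1, ?_⟩
  intro t
  induction t using Nat.strong_induction_on with
  | _ t ih =>
    match t with
    | 0 => omega
    | 1 =>
      intro _ h1T s a
      have hmass : ∑ a' : β, μ 1 s a' = if s = init then 1 else 0 := hμ.2.2.1 h1T s
      show (if s = init then (1:ℝ) else 0) * occPolicy μ s a 1 = μ 1 s a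
      by_cases hs : s = init
      · have hpos : 0 < ∑ a' : β, μ 1 s a' := by rw [hmass, if_pos hs]; norm_num
        rw [if_pos hs, one_mul]
        unfold occPolicy
        rw [if_pos hpos, hmass, if_pos hs, div_one]
      · have hzero : ∑ a' : β, μ 1 s a' = 0 := by rw [hmass, if_neg hs]
        have := (Finset.sum_eq_zero_iff_of_nonneg
          (fun a' _ => hμ.1 1 s a')).1 hzero a (Finset.mem_univ a)
        rw [if_neg hs, zero_mul, this]
    | (n+2) =>
      intro _ hT s a
      have hin : (∑ s' : σ, ∑ a' : β, saDist P init (occPolicy μ) (n+1) s' a' * P a' s' s)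
          = ∑ a' : β, μ (n+2) s a' := by
        rw [Finset.sum_congr rfl (fun s' _ => Finset.sum_congr rfl
          (fun a' _ => by rw [ih (n+1) (by omega) (by omega) (by omega) s' a']))]
        exact (hμ.2.2.2 (n+1) (by omega) (by omega) s).symm
      show (∑ s' : σ, ∑ a' : β, saDist P init (occPolicy μ) (n+1) s' a' * P a' s' s)
          * occPolicy μ s a (n+2) = μ (n+2) s a
      rw [hin]
      by_cases hpos : 0 < ∑ a' : β, μ (n+2) s a'
      · unfold occPolicy
        rw [if_pos hpos, mul_div_cancel₀ _ (ne_of_gt hpos)]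
      · have hzero : ∑ a' : β, μ (n+2) s a' = 0 :=
          le_antisymm (not_lt.1 hpos) (Finset.sum_nonneg fun a' _ => hμ.1 _ s a')
        have := (Finset.sum_eq_zero_iff_of_nonneg
          (fun a' _ => hμ.1 (n+2) s a')).1 hzero a (Finset.mem_univ a)
        rw [hzero, zero_mul, this]

variable (P init) in
def OccSet (T : ℕ) : Set (ℕ → σ → β → ℝ) := {μ | IsOccT P init T μ}

omit [Fintype σ] [DecidableEq σ] in
lemma continuous_eval (t : ℕ) (s : σ) (a : β) :
    Continuous fun μ : ℕ → σ → β → ℝ => μ t s a :=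
  (continuous_apply a).comp ((continuous_apply s).comp (continuous_apply t))

omit [DecidableEq σ] in
lemma continuous_sval (T : ℕ) (f : ℕ → σ → β → ℝ) :
    Continuous fun μ : ℕ → σ → β → ℝ => sval T μ f := by
  apply continuous_finset_sum _ fun t _ => ?_
  apply continuous_finset_sum _ fun s _ => ?_
  apply continuous_finset_sum _ fun a _ => ?_
  exact (continuous_eval t s a).mul continuous_const

lemma isClosed_occSet (T : ℕ) : IsClosed (OccSet P init T) := by
  classical
  have hsum : ∀ (t : ℕ) (s : σ), Continuous fun μ : ℕ → σ → β → ℝ => ∑ a : β, μ t s a :=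
    fun t s => continuous_finset_sum _ fun a _ => continuous_eval t s a
  have hflow : ∀ (t : ℕ) (s : σ),
      Continuous fun μ : ℕ → σ → β → ℝ => ∑ s' : σ, ∑ a' : β, μ t s' a' * P a' s' s :=
    fun t s => continuous_finset_sum _ fun s' _ => continuous_finset_sum _ fun a' _ =>
      (continuous_eval t s' a').mul continuous_const
  have heq : OccSet P init T =
      {μ : ℕ → σ → β → ℝ | ∀ t s a, 0 ≤ μ t s a} ∩
      ({μ | ∀ t, (t = 0 ∨ T < t) → ∀ s a, μ t s a = 0} ∩
      ({μ | 1 ≤ T → ∀ s, ∑ a : β, μ 1 s a = if s = init then 1 else 0} ∩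
      {μ | ∀ t, 1 ≤ t → t + 1 ≤ T → ∀ s,
        ∑ a : β, μ (t+1) s a = ∑ s' : σ, ∑ a' : β, μ t s' a' * P a' s' s})) := rfl
  rw [heq]
  refine IsClosed.inter ?_ (IsClosed.inter ?_ (IsClosed.inter ?_ ?_))
  · rw [Set.setOf_forall]
    refine isClosed_iInter fun t => ?_
    rw [Set.setOf_forall]
    refine isClosed_iInter fun s => ?_
    rw [Set.setOf_forall]
    refine isClosed_iInter fun a => ?_
    exact isClosed_le continuous_const (continuous_eval t s a)
  · rw [Set.setOf_forall]
    refine isClosed_iInter fun t => ?_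
    by_cases h : t = 0 ∨ T < t
    · simp only [h, true_implies]
      rw [Set.setOf_forall]
      refine isClosed_iInter fun s => ?_
      rw [Set.setOf_forall]
      refine isClosed_iInter fun a => ?_
      exact isClosed_eq (continuous_eval t s a) continuous_const
    · simp only [h, false_implies, Set.setOf_true]
      exact isClosed_univ
  · by_cases h : 1 ≤ T
    · simp only [h, true_implies]
      rw [Set.setOf_forall]
      refine isClosed_iInter fun s => ?_
      exact isClosed_eq (hsum 1 s) continuous_const
    · simp only [h, false_implies, Set.setOf_true]
      exact isClosed_univ
  · rw [Set.setOf_forall]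
    refine isClosed_iInter fun t => ?_
    by_cases h : 1 ≤ t ∧ t + 1 ≤ T
    · simp only [h.1, h.2, true_implies]
      rw [Set.setOf_forall]
      refine isClosed_iInter fun s => ?_
      exact isClosed_eq (hsum (t+1) s) (hflow t s)
    · rcases not_and_or.1 h with h1 | h1
      · simp only [h1, false_implies, Set.setOf_true]
        exact isClosed_univ
      · have : {μ : ℕ → σ → β → ℝ | 1 ≤ t → t + 1 ≤ T → ∀ s,
            ∑ a : β, μ (t+1) s a = ∑ s' : σ, ∑ a' : β, μ t s' a' * P a' s' s} = Set.univ := by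
          ext μ; simp only [Set.mem_setOf_eq, Set.mem_univ, iff_true]
          intro _ h2; exact absurd h2 h1
        rw [this]; exact isClosed_univ

lemma isCompact_occSet (hP : IsKernel P) (T : ℕ) : IsCompact (OccSet P init T) := by
  classical
  set C : ℕ → Set ℝ := fun t => if 1 ≤ t ∧ t ≤ T then Set.Icc (0:ℝ) 1 else {0} with hC
  have hbox : IsCompact {μ : ℕ → σ → β → ℝ | ∀ t s a, μ t s a ∈ C t} := by
    have heq : {μ : ℕ → σ → β → ℝ | ∀ t s a, μ t s a ∈ C t} =
        Set.univ.pi (fun t => Set.univ.pi fun _ : σ => Set.univ.pi fun _ : β => C t) := by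
      ext μ
      simp [Set.mem_pi]
    rw [heq]
    refine isCompact_univ_pi fun t => isCompact_univ_pi fun s => isCompact_univ_pi fun a => ?_
    simp only [hC]
    split_ifs
    · exact isCompact_Icc
    · exact isCompact_singleton
  refine IsCompact.of_isClosed_subset hbox (isClosed_occSet T) ?_
  intro μ hμ t s a
  simp only [hC]
  split_ifs with h
  · exact ⟨hμ.1 t s a, occ_le_one hP hμ h.1 h.2 s a⟩
  · have : t = 0 ∨ T < t := by omega
    exact hμ.2.1 t this s a

omit [Fintype σ] [DecidableEq σ] [Fintype β] in
lemma combo_apply (a b : ℝ) (μ1 μ2 : ℕ → σ → β → ℝ) (t : ℕ) (s : σ) (x : β) :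
    (a • μ1 + b • μ2) t s x = a * μ1 t s x + b * μ2 t s x := rfl

omit [DecidableEq σ] in
lemma sval_combo (T : ℕ) (f μ1 μ2 : ℕ → σ → β → ℝ) (a b : ℝ) :
    sval T (a • μ1 + b • μ2) f = a * sval T μ1 f + b * sval T μ2 f := by
  unfold sval
  simp only [combo_apply, add_mul, Finset.sum_add_distrib, Finset.mul_sum, mul_assoc]

lemma convex_occSet (T : ℕ) : Convex ℝ (OccSet P init T) := by
  intro μ1 h1 μ2 h2 a b ha hb hab
  refine ⟨?_, ?_, ?_, ?_⟩
  · intro t s x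
    rw [combo_apply]
    exact add_nonneg (mul_nonneg ha (h1.1 t s x)) (mul_nonneg hb (h2.1 t s x))
  · intro t ht s x
    rw [combo_apply, h1.2.1 t ht s x, h2.2.1 t ht s x]
    ring
  · intro hT s
    simp only [combo_apply]
    rw [Finset.sum_add_distrib, ← Finset.mul_sum, ← Finset.mul_sum,
      h1.2.2.1 hT s, h2.2.2.1 hT s]
    split_ifs <;> simp [← add_mul, hab]
  · intro t ht ht2 s
    simp only [combo_apply]
    rw [Finset.sum_add_distrib, ← Finset.mul_sum, ← Finset.mul_sum,
      h1.2.2.2 t ht ht2 s, h2.2.2.2 t ht ht2 s]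
    simp only [Finset.mul_sum]
    rw [← Finset.sum_add_distrib]
    refine Finset.sum_congr rfl fun s' _ => ?_
    rw [← Finset.sum_add_distrib]
    refine Finset.sum_congr rfl fun a' _ => ?_
    ring


end CoreAux

section SumAux

lemma sum_swap3 {A B C : Type*} [Fintype A] [Fintype B] [Fintype C] (F : A → B → C → ℝ) :
    ∑ a : A, ∑ b : B, ∑ c : C, F a b c = ∑ b : B, ∑ c : C, ∑ a : A, F a b c := by
  rw [Finset.sum_comm]
  exact Finset.sum_congr rfl fun b _ => Finset.sum_comm

lemma sum_swap4 {A B C D : Type*} [Fintype A] [Fintype B] [Fintype C] [Fintype D]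
    (F : A → B → C → D → ℝ) :
    ∑ a : A, ∑ b : B, ∑ c : C, ∑ d : D, F a b c d
      = ∑ c : C, ∑ d : D, ∑ a : A, ∑ b : B, F a b c d := by
  have h1 : ∀ a : A, ∑ b : B, ∑ c : C, ∑ d : D, F a b c d
      = ∑ c : C, ∑ d : D, ∑ b : B, F a b c d := fun a => sum_swap3 _
  rw [Finset.sum_congr rfl fun a _ => h1 a]
  exact sum_swap3 _

lemma sum_pi_prod {ι : Type*} [Fintype ι] [DecidableEq ι] {σ β : Type*} [Fintype σ] [Fintype β]
    (F : ι → σ → β → ℝ) :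
    ∑ sb : ι → σ, ∑ ab : ι → β, ∏ y, F y (sb y) (ab y) = ∏ y, ∑ s, ∑ a, F y s a := by
  symm
  rw [Finset.prod_univ_sum, Fintype.piFinset_univ]
  refine Finset.sum_congr rfl fun sb _ => ?_
  rw [Finset.prod_univ_sum, Fintype.piFinset_univ]

lemma sum_pi_prod1 {ι : Type*} [Fintype ι] [DecidableEq ι] {σ : Type*} [Fintype σ]
    (H : ι → σ → ℝ) :
    ∑ sb : ι → σ, ∏ y, H y (sb y) = ∏ y, ∑ s, H y s := by
  symm
  rw [Finset.prod_univ_sum, Fintype.piFinset_univ]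


end SumAux

section JointAux
set_option linter.unusedSectionVars false
set_option linter.unusedVariables false
variable {S : Type*} [Fintype S] [DecidableEq S]
variable {P : Bool → S → S → ℝ} {s1 : S} {π : S → Bool → ℕ → ℝ}

lemma isKernel_jointKernel (hP : IsKernel P) (K : ℕ) : IsKernel (jointKernel P K) := by
  constructor
  · intro a s s'; exact Finset.prod_nonneg fun x _ => hP.1 _ _ _
  · intro a s
    unfold jointKernel
    have h := Finset.prod_univ_sum (fun _ : Fin K => (univ : Finset S))
      (fun x s' => P (a x) (s x) s')
    rw [Fintype.piFinset_univ] at h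
    rw [← h]
    simp [hP.2]

/-- The product policy on `K` arms. -/
def prodPolicy (π : S → Bool → ℕ → ℝ) (K : ℕ) : (Fin K → S) → (Fin K → Bool) → ℕ → ℝ :=
  fun s a t => ∏ x, π (s x) (a x) t

lemma isPolicy_prodPolicy (hπ : IsPolicy π) (K : ℕ) : IsPolicy (prodPolicy π K) := by
  constructor
  · intro s a t; exact Finset.prod_nonneg fun x _ => hπ.1 _ _ _
  · intro s t
    unfold prodPolicy
    have h := Finset.prod_univ_sum (fun _ : Fin K => (univ : Finset Bool))
      (fun x a => π (s x) a t)
    rw [Fintype.piFinset_univ] at h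
    rw [← h, Finset.prod_congr rfl fun x _ => hπ.2 (s x) t]
    simp

lemma saDist_prodPolicy (hP : IsKernel P) (hπ : IsPolicy π) (K : ℕ) :
    ∀ t, 1 ≤ t → ∀ (sb : Fin K → S) (ab : Fin K → Bool),
      saDist (jointKernel P K) (fun _ => s1) (prodPolicy π K) t sb ab
        = ∏ x, saDist P s1 π t (sb x) (ab x) := by
  intro t
  induction t using Nat.strong_induction_on with
  | _ t ih =>
    match t with
    | 0 => omega
    | 1 =>
      intro _ sb ab
      show (if sb = fun _ => s1 then (1:ℝ) else 0) * prodPolicy π K sb ab 1 = _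
      have hrhs : ∀ x : Fin K, saDist P s1 π 1 (sb x) (ab x)
          = (if sb x = s1 then (1:ℝ) else 0) * π (sb x) (ab x) 1 := fun _ => rfl
      rw [Finset.prod_congr rfl fun x _ => hrhs x, Finset.prod_mul_distrib]
      unfold prodPolicy
      congr 1
      by_cases h : sb = fun _ => s1
      · rw [if_pos h]
        symm
        apply Finset.prod_eq_one
        intro x _
        rw [if_pos (by rw [h])]
      · rw [if_neg h]
        obtain ⟨x, hx⟩ : ∃ x, sb x ≠ s1 := by
          by_contra hc
          push_neg at hc
          exact h (funext hc)
        symm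
        exact Finset.prod_eq_zero (Finset.mem_univ x) (if_neg hx)
    | (n+2) =>
      intro _ sb ab
      have hdef : saDist (jointKernel P K) (fun _ => s1) (prodPolicy π K) (n+2) sb ab
          = (∑ sb' : Fin K → S, ∑ ab' : Fin K → Bool,
              saDist (jointKernel P K) (fun _ => s1) (prodPolicy π K) (n+1) sb' ab'
                * jointKernel P K ab' sb' sb) * prodPolicy π K sb ab (n+2) := rfl
      rw [hdef]
      have h1 : ∀ (sb' : Fin K → S) (ab' : Fin K → Bool),
          saDist (jointKernel P K) (fun _ => s1) (prodPolicy π K) (n+1) sb' ab'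
            * jointKernel P K ab' sb' sb
          = ∏ x, (saDist P s1 π (n+1) (sb' x) (ab' x) * P (ab' x) (sb' x) (sb x)) := by
        intro sb' ab'
        rw [ih (n+1) (by omega) (by omega) sb' ab']
        unfold jointKernel
        rw [Finset.prod_mul_distrib]
      rw [Finset.sum_congr rfl fun sb' _ => Finset.sum_congr rfl fun ab' _ => h1 sb' ab']
      rw [sum_pi_prod (fun y s a => saDist P s1 π (n+1) s a * P a s (sb y))]
      unfold prodPolicy
      rw [← Finset.prod_mul_distrib]
      refine Finset.prod_congr rfl fun x _ => ?_
      rfl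

end JointAux

section Dir1
set_option linter.unusedSectionVars false
set_option linter.unusedVariables false
variable {S : Type*} [Fintype S] [DecidableEq S]
variable {P : Bool → S → S → ℝ} {s1 : S} {π : S → Bool → ℕ → ℝ}

lemma sum_swap3' {A B C : Type*} [Fintype A] [Fintype B] [Fintype C] (F : A → B → C → ℝ) :
    ∑ a : A, ∑ b : B, ∑ c : C, F a b c = ∑ c : C, ∑ a : A, ∑ b : B, F a b c := by
  calc ∑ a : A, ∑ b : B, ∑ c : C, F a b c
      = ∑ a : A, ∑ c : C, ∑ b : B, F a b c :=
        Finset.sum_congr rfl fun a _ => Finset.sum_comm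
    _ = ∑ c : C, ∑ a : A, ∑ b : B, F a b c := Finset.sum_comm

lemma joint_mass_prod (hP : IsKernel P) (hπ : IsPolicy π) {K t : ℕ} (ht : 1 ≤ t) :
    ∑ sb : Fin K → S, ∑ ab : Fin K → Bool, (∏ y, saDist P s1 π t (sb y) (ab y)) = 1 := by
  rw [sum_pi_prod (fun _ s a => saDist P s1 π t s a)]
  rw [Finset.prod_congr rfl fun y _ => saDist_mass hP hπ t ht]
  simp

lemma key_prod (hP : IsKernel P) (hπ : IsPolicy π) {K t : ℕ} (ht : 1 ≤ t)
    (g : S → Bool → ℝ) (x : Fin K) :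
    ∑ sb : Fin K → S, ∑ ab : Fin K → Bool,
      (∏ y, saDist P s1 π t (sb y) (ab y)) * g (sb x) (ab x)
    = ∑ s : S, ∑ a : Bool, saDist P s1 π t s a * g s a := by
  have h1 : ∀ (sb : Fin K → S) (ab : Fin K → Bool),
      (∏ y, saDist P s1 π t (sb y) (ab y)) * g (sb x) (ab x)
      = ∏ y, (saDist P s1 π t (sb y) (ab y) * if y = x then g (sb y) (ab y) else 1) := by
    intro sb ab
    rw [Finset.prod_mul_distrib]
    congr 1
    rw [Finset.prod_ite_eq' univ x (fun y => g (sb y) (ab y))]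
    simp
  rw [Finset.sum_congr rfl fun sb _ => Finset.sum_congr rfl fun ab _ => h1 sb ab]
  rw [sum_pi_prod (fun y s a => saDist P s1 π t s a * if y = x then g s a else 1)]
  have h2 : ∀ y : Fin K, (∑ s : S, ∑ a : Bool, saDist P s1 π t s a * if y = x then g s a else 1)
      = if y = x then ∑ s : S, ∑ a : Bool, saDist P s1 π t s a * g s a else 1 := by
    intro y
    by_cases hy : y = x
    · simp [hy]
    · simp only [if_neg hy, mul_one]
      exact saDist_mass hP hπ t ht
  rw [Finset.prod_congr rfl fun y _ => h2 y, Finset.prod_ite_eq' univ x _]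
  simp

lemma prodPolicy_expVal (hP : IsKernel P) (hπ : IsPolicy π) {K : ℕ} (hK : 0 < K)
    (r : ℕ → S → Bool → ℝ) (lam : ℕ → ℝ) (m : ℕ) (T : ℕ) :
    expVal (jointKernel P K) (fun _ => s1) (prodPolicy π K) T
        (fun t sb ab => jointReward r K t sb ab - lam t * (numActive ab - (m:ℝ)))
      = K * subValue P s1 r lam T π + (∑ t ∈ Finset.Icc 1 T, lam t) * m := by
  have hterm : ∀ t ∈ Finset.Icc 1 T,
      ∑ sb : Fin K → S, ∑ ab : Fin K → Bool,
        saDist (jointKernel P K) (fun _ => s1) (prodPolicy π K) t sb ab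
          * (jointReward r K t sb ab - lam t * (numActive ab - (m:ℝ)))
      = K * (∑ s : S, ∑ a : Bool, saDist P s1 π t s a * (r t s a - lam t * actVal a))
          + lam t * m := by
    intro t ht
    rw [Finset.mem_Icc] at ht
    have hdec : ∀ (sb : Fin K → S) (ab : Fin K → Bool),
        jointReward r K t sb ab - lam t * (numActive ab - (m:ℝ))
        = (∑ x, (r t (sb x) (ab x) - lam t * actVal (ab x))) + lam t * m := by
      intro sb ab
      unfold jointReward numActive
      rw [mul_sub, Finset.mul_sum, Finset.sum_sub_distrib]
      ring
    calc ∑ sb : Fin K → S, ∑ ab : Fin K → Bool,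
          saDist (jointKernel P K) (fun _ => s1) (prodPolicy π K) t sb ab
            * (jointReward r K t sb ab - lam t * (numActive ab - (m:ℝ)))
        = ∑ sb : Fin K → S, ∑ ab : Fin K → Bool,
            ((∑ x, (∏ y, saDist P s1 π t (sb y) (ab y)) * (r t (sb x) (ab x) - lam t * actVal (ab x)))
              + (∏ y, saDist P s1 π t (sb y) (ab y)) * (lam t * m)) := by
          refine Finset.sum_congr rfl fun sb _ => Finset.sum_congr rfl fun ab _ => ?_
          rw [saDist_prodPolicy hP hπ K t ht.1 sb ab, hdec sb ab, mul_add, Finset.mul_sum]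
      _ = (∑ sb : Fin K → S, ∑ ab : Fin K → Bool,
            ∑ x, (∏ y, saDist P s1 π t (sb y) (ab y)) * (r t (sb x) (ab x) - lam t * actVal (ab x)))
          + (∑ sb : Fin K → S, ∑ ab : Fin K → Bool,
            (∏ y, saDist P s1 π t (sb y) (ab y)) * (lam t * m)) := by
          rw [← Finset.sum_add_distrib]
          refine Finset.sum_congr rfl fun sb _ => ?_
          rw [← Finset.sum_add_distrib]
      _ = K * (∑ s : S, ∑ a : Bool, saDist P s1 π t s a * (r t s a - lam t * actVal a))
          + lam t * m := by
          congr 1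
          · rw [sum_swap3' (fun (sb : Fin K → S) (ab : Fin K → Bool) (x : Fin K) =>
              (∏ y, saDist P s1 π t (sb y) (ab y))
              * (r t (sb x) (ab x) - lam t * actVal (ab x)))]
            rw [Finset.sum_congr rfl fun x _ =>
              key_prod hP hπ ht.1 (fun s a => r t s a - lam t * actVal a) x]
            rw [Finset.sum_const, Finset.card_univ, Fintype.card_fin, nsmul_eq_mul]
          · calc ∑ sb : Fin K → S, ∑ ab : Fin K → Bool,
                (∏ y, saDist P s1 π t (sb y) (ab y)) * (lam t * (m:ℝ))
                = (∑ sb : Fin K → S, ∑ ab : Fin K → Bool,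
                    ∏ y, saDist P s1 π t (sb y) (ab y)) * (lam t * (m:ℝ)) := by
                  rw [Finset.sum_mul]
                  exact Finset.sum_congr rfl fun sb _ => (Finset.sum_mul _ _ _).symm
              _ = lam t * m := by rw [joint_mass_prod hP hπ ht.1, one_mul]
  unfold expVal
  rw [Finset.sum_congr rfl hterm, Finset.sum_add_distrib, ← Finset.mul_sum, ← Finset.sum_mul]
  rfl

end Dir1

section Dir2
set_option linter.unusedSectionVars false
set_option linter.unusedVariables false
variable {S : Type*} [Fintype S] [DecidableEq S]
variable {P : Bool → S → S → ℝ} {s1 : S} {K : ℕ}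
variable {πb : (Fin K → S) → (Fin K → Bool) → ℕ → ℝ}

/-- The marginal state-action distribution of arm `x` under a joint policy. -/
noncomputable def marg (P : Bool → S → S → ℝ) (s1 : S) (K : ℕ)
    (πb : (Fin K → S) → (Fin K → Bool) → ℕ → ℝ) (x : Fin K) : ℕ → S → Bool → ℝ :=
  fun t s a => ∑ sb : Fin K → S, ∑ ab : Fin K → Bool,
    (if sb x = s then (1:ℝ) else 0) * (if ab x = a then (1:ℝ) else 0)
      * saDist (jointKernel P K) (fun _ => s1) πb t sb ab

lemma marg_val (x : Fin K) (t : ℕ) (g : S → Bool → ℝ) :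
    ∑ s : S, ∑ a : Bool, marg P s1 K πb x t s a * g s a
      = ∑ sb : Fin K → S, ∑ ab : Fin K → Bool,
          saDist (jointKernel P K) (fun _ => s1) πb t sb ab * g (sb x) (ab x) := by
  unfold marg
  have h1 : ∀ (s : S) (a : Bool),
      (∑ sb : Fin K → S, ∑ ab : Fin K → Bool,
        (if sb x = s then (1:ℝ) else 0) * (if ab x = a then (1:ℝ) else 0)
          * saDist (jointKernel P K) (fun _ => s1) πb t sb ab) * g s a
      = ∑ sb : Fin K → S, ∑ ab : Fin K → Bool,
        (if sb x = s then (1:ℝ) else 0) * (if ab x = a then (1:ℝ) else 0)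
          * saDist (jointKernel P K) (fun _ => s1) πb t sb ab * g s a := by
    intro s a
    rw [Finset.sum_mul]
    exact Finset.sum_congr rfl fun sb _ => Finset.sum_mul _ _ _
  rw [Finset.sum_congr rfl fun s _ => Finset.sum_congr rfl fun a _ => h1 s a]
  rw [sum_swap4 (fun (s : S) (a : Bool) (sb : Fin K → S) (ab : Fin K → Bool) =>
    (if sb x = s then (1:ℝ) else 0) * (if ab x = a then (1:ℝ) else 0)
      * saDist (jointKernel P K) (fun _ => s1) πb t sb ab * g s a)]
  refine Finset.sum_congr rfl fun sb _ => Finset.sum_congr rfl fun ab _ => ?_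
  rw [Finset.sum_eq_single (sb x) (fun s _ hs => ?_) (fun h => absurd (Finset.mem_univ _) h)]
  · rw [Finset.sum_eq_single (ab x) (fun a _ ha => ?_) (fun h => absurd (Finset.mem_univ _) h)]
    · rw [if_pos rfl, if_pos rfl]; ring
    · rw [if_neg (Ne.symm ha)]; ring
  · apply Finset.sum_eq_zero
    intro a _
    rw [if_neg (Ne.symm hs)]; ring

lemma marg_nonneg (hP : IsKernel P) (hπb : IsPolicy πb) (x : Fin K) (t : ℕ) (s : S) (a : Bool) :
    0 ≤ marg P s1 K πb x t s a := by
  apply Finset.sum_nonneg; intro sb _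
  apply Finset.sum_nonneg; intro ab _
  have h0 := saDist_nonneg (init := fun _ => s1) (isKernel_jointKernel hP K) hπb t sb ab
  positivity

lemma marg_sum_a (hπb : IsPolicy πb) (x : Fin K) (t : ℕ) (s : S) :
    ∑ a : Bool, marg P s1 K πb x t s a
      = ∑ sb : Fin K → S, ∑ ab : Fin K → Bool, (if sb x = s then (1:ℝ) else 0)
          * saDist (jointKernel P K) (fun _ => s1) πb t sb ab := by
  unfold marg
  rw [sum_swap3 (fun (a : Bool) (sb : Fin K → S) (ab : Fin K → Bool) =>
    (if sb x = s then (1:ℝ) else 0) * (if ab x = a then (1:ℝ) else 0)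
      * saDist (jointKernel P K) (fun _ => s1) πb t sb ab)]
  refine Finset.sum_congr rfl fun sb _ => Finset.sum_congr rfl fun ab _ => ?_
  rw [Finset.sum_eq_single (ab x) (fun a _ ha => by rw [if_neg (Ne.symm ha)]; ring)
    (fun h => absurd (Finset.mem_univ _) h), if_pos rfl, mul_one]

lemma isOccT_trunc_marg (hP : IsKernel P) (hπb : IsPolicy πb) (x : Fin K) (T : ℕ) :
    IsOccT P s1 T (trunc T (marg P s1 K πb x)) := by
  have hjsd : ∀ t sb ab, 0 ≤ saDist (jointKernel P K) (fun _ => s1) πb t sb ab :=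
    saDist_nonneg (isKernel_jointKernel hP K) hπb
  refine ⟨?_, ?_, ?_, ?_⟩
  · intro t s a
    unfold trunc
    split
    · exact marg_nonneg hP hπb x t s a
    · exact le_refl 0
  · intro t ht s a
    unfold trunc
    rw [if_neg (by omega)]
  · intro hT s
    unfold trunc
    rw [if_pos (by omega)]
    rw [marg_sum_a hπb]
    have h1 : ∀ sb : Fin K → S, ∑ ab : Fin K → Bool,
        (if sb x = s then (1:ℝ) else 0) * saDist (jointKernel P K) (fun _ => s1) πb 1 sb ab
        = (if sb x = s then (1:ℝ) else 0) * (if sb = (fun _ => s1) then 1 else 0) := by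
      intro sb
      rw [← Finset.mul_sum]
      congr 1
      show ∑ ab : Fin K → Bool, (if sb = fun _ => s1 then (1:ℝ) else 0) * πb sb ab 1 = _
      rw [← Finset.mul_sum, hπb.2, mul_one]
    rw [Finset.sum_congr rfl fun sb _ => h1 sb]
    rw [Finset.sum_eq_single ((fun _ => s1) : Fin K → S)
      (fun sb _ hsb => by rw [if_neg hsb, mul_zero])
      (fun h => absurd (Finset.mem_univ _) h)]
    by_cases hs : s = s1
    · rw [if_pos (by rw [hs]), if_pos rfl, if_pos hs, mul_one]
    · rw [if_neg (fun h => hs h.symm), if_neg hs, zero_mul]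
  · intro t ht ht2 s
    unfold trunc
    rw [if_pos (by omega), if_pos (by omega)]
    match t, ht with
    | (n+1), _ =>
      rw [marg_sum_a hπb]
      have hdef : ∀ (sb : Fin K → S) (ab : Fin K → Bool),
          saDist (jointKernel P K) (fun _ => s1) πb (n+2) sb ab
          = (∑ sb' : Fin K → S, ∑ ab' : Fin K → Bool,
              saDist (jointKernel P K) (fun _ => s1) πb (n+1) sb' ab'
                * jointKernel P K ab' sb' sb) * πb sb ab (n+2) := fun _ _ => rfl
    
      have h2 : ∀ sb : Fin K → S, ∑ ab : Fin K → Bool,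
          (if sb x = s then (1:ℝ) else 0) * saDist (jointKernel P K) (fun _ => s1) πb (n+2) sb ab
          = ∑ sb' : Fin K → S, ∑ ab' : Fin K → Bool,
              (if sb x = s then (1:ℝ) else 0) *
                (saDist (jointKernel P K) (fun _ => s1) πb (n+1) sb' ab'
                  * jointKernel P K ab' sb' sb) := by
        intro sb
        rw [Finset.sum_congr rfl fun ab _ => by rw [hdef sb ab]]
        rw [← Finset.mul_sum, ← Finset.mul_sum, hπb.2, mul_one, Finset.mul_sum]
        exact Finset.sum_congr rfl fun sb' _ => Finset.mul_sum _ _ _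
      rw [Finset.sum_congr rfl fun sb _ => h2 sb]
      rw [sum_swap3 (fun (sb sb' : Fin K → S) (ab' : Fin K → Bool) =>
        (if sb x = s then (1:ℝ) else 0) *
          (saDist (jointKernel P K) (fun _ => s1) πb (n+1) sb' ab'
            * jointKernel P K ab' sb' sb))]
      have h3 : ∀ (sb' : Fin K → S) (ab' : Fin K → Bool),
          ∑ sb : Fin K → S, (if sb x = s then (1:ℝ) else 0) *
            (saDist (jointKernel P K) (fun _ => s1) πb (n+1) sb' ab'
              * jointKernel P K ab' sb' sb)
          = saDist (jointKernel P K) (fun _ => s1) πb (n+1) sb' ab' * P (ab' x) (sb' x) s := by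
        intro sb' ab'
        have h4 : ∀ sb : Fin K → S, (if sb x = s then (1:ℝ) else 0) *
            (saDist (jointKernel P K) (fun _ => s1) πb (n+1) sb' ab'
              * jointKernel P K ab' sb' sb)
            = saDist (jointKernel P K) (fun _ => s1) πb (n+1) sb' ab' *
              ∏ y, (P (ab' y) (sb' y) (sb y) * if y = x then (if sb y = s then (1:ℝ) else 0) else 1) := by
          intro sb
          rw [Finset.prod_mul_distrib, Finset.prod_ite_eq' univ x
            (fun y => if sb y = s then (1:ℝ) else 0)]
          simp only [Finset.mem_univ, if_true]
          show (if sb x = s then (1:ℝ) else 0) * (_ * jointKernel P K ab' sb' sb) = _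
          unfold jointKernel
          ring
        rw [Finset.sum_congr rfl fun sb _ => h4 sb, ← Finset.mul_sum]
        congr 1
        rw [sum_pi_prod1 (fun y s'' => P (ab' y) (sb' y) s''
          * if y = x then (if s'' = s then (1:ℝ) else 0) else 1)]
        have h5 : ∀ y : Fin K, (∑ s'' : S, P (ab' y) (sb' y) s''
            * if y = x then (if s'' = s then (1:ℝ) else 0) else 1)
            = if y = x then P (ab' x) (sb' x) s else 1 := by
          intro y
          by_cases hy : y = x
          · rw [Finset.sum_congr rfl fun s'' _ => by rw [if_pos hy], if_pos hy, hy]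
            rw [Finset.sum_eq_single s (fun s'' _ hss => by rw [if_neg hss, mul_zero])
              (fun h => absurd (Finset.mem_univ _) h), if_pos rfl, mul_one]
          · simp only [if_neg hy, mul_one]
            exact hP.2 _ _
        rw [Finset.prod_congr rfl fun y _ => h5 y, Finset.prod_ite_eq' univ x
          (fun _ => P (ab' x) (sb' x) s)]
        simp
      rw [Finset.sum_congr rfl fun sb' _ => Finset.sum_congr rfl fun ab' _ => h3 sb' ab']
      exact (marg_val x (n+1) (fun s' a' => P a' s' s)).symm

end Dir2

section BoundAux
set_option linter.unusedSectionVars false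
variable {σ β : Type*} [Fintype σ] [Fintype β] [DecidableEq σ]
variable {P : β → σ → σ → ℝ} {init : σ} {π : σ → β → ℕ → ℝ}

lemma expVal_le_bound (hP : IsKernel P) (hπ : IsPolicy π) (T : ℕ) (f : ℕ → σ → β → ℝ) :
    expVal P init π T f ≤ ∑ t ∈ Finset.Icc 1 T, ∑ s : σ, ∑ a : β, |f t s a| := by
  refine Finset.sum_le_sum fun t ht => Finset.sum_le_sum fun s _ =>
    Finset.sum_le_sum fun a _ => ?_
  rw [Finset.mem_Icc] at ht
  calc saDist P init π t s a * f t s a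
      ≤ saDist P init π t s a * |f t s a| :=
        mul_le_mul_of_nonneg_left (le_abs_self _) (saDist_nonneg hP hπ t s a)
    _ ≤ 1 * |f t s a| :=
        mul_le_mul_of_nonneg_right (saDist_le_one hP hπ ht.1 s a) (abs_nonneg _)
    _ = |f t s a| := one_mul _

end BoundAux

section MainAux
set_option linter.unusedSectionVars false
set_option linter.unusedVariables false
variable {S : Type*} [Fintype S] [DecidableEq S]
variable {P : Bool → S → S → ℝ} {s1 : S} {r : ℕ → S → Bool → ℝ} {T K : ℕ}

/-- The penalized single-arm reward. -/
noncomputable def flam (r : ℕ → S → Bool → ℝ) (lam : ℕ → ℝ) : ℕ → S → Bool → ℝ :=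
  fun t s a => r t s a - lam t * actVal a

lemma subValue_eq_sval (lam : ℕ → ℝ) (π : S → Bool → ℕ → ℝ) :
    subValue P s1 r lam T π = sval T (saDist P s1 π) (flam r lam) := rfl

lemma Qset_eq_image (hP : IsKernel P) (lam : ℕ → ℝ) :
    {v | ∃ π : S → Bool → ℕ → ℝ, IsPolicy π ∧ v = subValue P s1 r lam T π}
      = (fun μ => sval T μ (flam r lam)) '' OccSet P s1 T := by
  ext v
  constructor
  · rintro ⟨π, hπ, rfl⟩
    refine ⟨trunc T (saDist P s1 π), isOccT_trunc_saDist hP hπ T, ?_⟩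
    show sval T (trunc T (saDist P s1 π)) (flam r lam) = _
    rw [sval_trunc]
    rfl
  · rintro ⟨μ, hμ, rfl⟩
    obtain ⟨π, hπ, hsa⟩ := exists_policy_of_isOccT hP hμ
    refine ⟨π, hπ, ?_⟩
    rw [subValue_eq_sval]
    unfold sval
    refine Finset.sum_congr rfl fun t ht => ?_
    rw [Finset.mem_Icc] at ht
    exact Finset.sum_congr rfl fun s _ => Finset.sum_congr rfl fun a _ => by
      rw [hsa t ht.1 ht.2 s a]

lemma exists_Qmax (hP : IsKernel P) (lam : ℕ → ℝ) :
    ∃ μ ∈ OccSet P s1 T, sval T μ (flam r lam) = Qval P s1 r T lam ∧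
      ∀ μ' ∈ OccSet P s1 T, sval T μ' (flam r lam) ≤ sval T μ (flam r lam) := by
  have hne : (OccSet P s1 T).Nonempty :=
    ⟨trunc T (saDist P s1 (occPolicy fun _ _ _ => (0:ℝ))),
      isOccT_trunc_saDist hP (isPolicy_occPolicy fun _ _ _ => le_refl 0) T⟩
  obtain ⟨μ, hμ, hmax⟩ := (isCompact_occSet hP T).exists_isMaxOn hne
    (continuous_sval T (flam r lam)).continuousOn
  have hmax' : ∀ μ' ∈ OccSet P s1 T, sval T μ' (flam r lam) ≤ sval T μ (flam r lam) :=
    fun μ' hμ' => hmax hμ'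
  refine ⟨μ, hμ, ?_, hmax'⟩
  have hgr : IsGreatest {v | ∃ π : S → Bool → ℕ → ℝ, IsPolicy π ∧ v = subValue P s1 r lam T π}
      (sval T μ (flam r lam)) := by
    rw [Qset_eq_image hP lam]
    exact ⟨⟨μ, hμ, rfl⟩, by rintro v ⟨μ', hμ', rfl⟩; exact hmax' μ' hμ'⟩
  exact hgr.csSup_eq.symm

lemma subValue_le_Qval (hP : IsKernel P) (lam : ℕ → ℝ) {π : S → Bool → ℕ → ℝ}
    (hπ : IsPolicy π) : subValue P s1 r lam T π ≤ Qval P s1 r T lam := by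
  obtain ⟨μ, hμ, hQ, hmax⟩ := exists_Qmax (r := r) hP lam
  rw [← hQ, subValue_eq_sval, ← sval_trunc T (saDist P s1 π) (flam r lam)]
  exact hmax _ (isOccT_trunc_saDist hP hπ T)

lemma bddAbove_lagrange (hP : IsKernel P) (m : ℕ) (lam : ℕ → ℝ) :
    BddAbove {v | ∃ πb : (Fin K → S) → (Fin K → Bool) → ℕ → ℝ, IsPolicy πb ∧
      v = expVal (jointKernel P K) (fun _ => s1) πb T
        (fun t s a => jointReward r K t s a - lam t * (numActive a - (m : ℝ)))} := by
  refine ⟨∑ t ∈ Finset.Icc 1 T, ∑ sb : Fin K → S, ∑ ab : Fin K → Bool,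
    |jointReward r K t sb ab - lam t * (numActive ab - (m : ℝ))|, ?_⟩
  rintro v ⟨πb, hπb, rfl⟩
  exact expVal_le_bound (isKernel_jointKernel hP K) hπb T _

lemma lagrange_ge (hP : IsKernel P) (hK : 0 < K) (m : ℕ) (lam : ℕ → ℝ) :
    (K:ℝ) * Qval P s1 r T lam + (∑ t ∈ Finset.Icc 1 T, lam t) * m
      ≤ lagrangeValue P s1 r T K m lam := by
  obtain ⟨μ, hμ, hQ, _⟩ := exists_Qmax (r := r) hP lam
  obtain ⟨π, hπ, hsa⟩ := exists_policy_of_isOccT hP hμ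
  have hsub : subValue P s1 r lam T π = Qval P s1 r T lam := by
    rw [← hQ, subValue_eq_sval]
    refine Finset.sum_congr rfl fun t ht => ?_
    rw [Finset.mem_Icc] at ht
    exact Finset.sum_congr rfl fun s _ => Finset.sum_congr rfl fun a _ => by
      rw [hsa t ht.1 ht.2 s a]
  apply le_csSup (bddAbove_lagrange hP m lam)
  exact ⟨prodPolicy π K, isPolicy_prodPolicy hπ K,
    by rw [prodPolicy_expVal hP hπ hK r lam m T, hsub]⟩

lemma joint_expVal_decomp {K : ℕ} {πb : (Fin K → S) → (Fin K → Bool) → ℕ → ℝ}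
    (hP : IsKernel P) (hπb : IsPolicy πb) (lam : ℕ → ℝ) (m : ℕ) :
    expVal (jointKernel P K) (fun _ => s1) πb T
        (fun t sb ab => jointReward r K t sb ab - lam t * (numActive ab - (m:ℝ)))
      = (∑ x : Fin K, sval T (marg P s1 K πb x) (flam r lam))
          + (∑ t ∈ Finset.Icc 1 T, lam t) * m := by
  have hterm : ∀ t ∈ Finset.Icc 1 T,
      ∑ sb : Fin K → S, ∑ ab : Fin K → Bool,
        saDist (jointKernel P K) (fun _ => s1) πb t sb ab
          * (jointReward r K t sb ab - lam t * (numActive ab - (m:ℝ)))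
      = (∑ x : Fin K, ∑ s : S, ∑ a : Bool, marg P s1 K πb x t s a * flam r lam t s a)
          + lam t * m := by
    intro t ht
    rw [Finset.mem_Icc] at ht
    have hdec : ∀ (sb : Fin K → S) (ab : Fin K → Bool),
        jointReward r K t sb ab - lam t * (numActive ab - (m:ℝ))
        = (∑ x, (r t (sb x) (ab x) - lam t * actVal (ab x))) + lam t * m := by
      intro sb ab
      unfold jointReward numActive
      rw [mul_sub, Finset.mul_sum, Finset.sum_sub_distrib]
      ring
    calc ∑ sb : Fin K → S, ∑ ab : Fin K → Bool,
          saDist (jointKernel P K) (fun _ => s1) πb t sb ab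
            * (jointReward r K t sb ab - lam t * (numActive ab - (m:ℝ)))
        = ∑ sb : Fin K → S, ∑ ab : Fin K → Bool,
            ((∑ x, saDist (jointKernel P K) (fun _ => s1) πb t sb ab
                * (r t (sb x) (ab x) - lam t * actVal (ab x)))
              + saDist (jointKernel P K) (fun _ => s1) πb t sb ab * (lam t * m)) := by
          refine Finset.sum_congr rfl fun sb _ => Finset.sum_congr rfl fun ab _ => ?_
          rw [hdec sb ab, mul_add, Finset.mul_sum]
      _ = (∑ sb : Fin K → S, ∑ ab : Fin K → Bool,
            ∑ x, saDist (jointKernel P K) (fun _ => s1) πb t sb ab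
              * (r t (sb x) (ab x) - lam t * actVal (ab x)))
          + (∑ sb : Fin K → S, ∑ ab : Fin K → Bool,
            saDist (jointKernel P K) (fun _ => s1) πb t sb ab * (lam t * m)) := by
          rw [← Finset.sum_add_distrib]
          refine Finset.sum_congr rfl fun sb _ => ?_
          rw [← Finset.sum_add_distrib]
      _ = (∑ x : Fin K, ∑ s : S, ∑ a : Bool, marg P s1 K πb x t s a * flam r lam t s a)
          + lam t * m := by
          congr 1
          · rw [sum_swap3' (fun (sb : Fin K → S) (ab : Fin K → Bool) (x : Fin K) =>
              saDist (jointKernel P K) (fun _ => s1) πb t sb ab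
                * (r t (sb x) (ab x) - lam t * actVal (ab x)))]
            refine Finset.sum_congr rfl fun x _ => ?_
            exact (marg_val x t (fun s a => r t s a - lam t * actVal a)).symm
          · calc ∑ sb : Fin K → S, ∑ ab : Fin K → Bool,
                saDist (jointKernel P K) (fun _ => s1) πb t sb ab * (lam t * (m:ℝ))
                = (∑ sb : Fin K → S, ∑ ab : Fin K → Bool,
                    saDist (jointKernel P K) (fun _ => s1) πb t sb ab) * (lam t * (m:ℝ)) := by
                  rw [Finset.sum_mul]
                  exact Finset.sum_congr rfl fun sb _ => (Finset.sum_mul _ _ _).symm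
              _ = lam t * m := by
                  rw [saDist_mass (isKernel_jointKernel hP K) hπb t ht.1, one_mul]
  unfold expVal
  rw [Finset.sum_congr rfl hterm, Finset.sum_add_distrib, ← Finset.sum_mul]
  congr 1
  rw [Finset.sum_comm]
  rfl

lemma lagrange_le (hP : IsKernel P) (hK : 0 < K) (m : ℕ) (lam : ℕ → ℝ) :
    lagrangeValue P s1 r T K m lam
      ≤ (K:ℝ) * Qval P s1 r T lam + (∑ t ∈ Finset.Icc 1 T, lam t) * m := by
  apply csSup_le
  · exact ⟨_, ⟨occPolicy (fun _ _ _ => (0:ℝ)), isPolicy_occPolicy (fun _ _ _ => le_refl 0), rfl⟩⟩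
  · rintro v ⟨πb, hπb, rfl⟩
    rw [joint_expVal_decomp hP hπb lam m]
    have harm : ∀ x : Fin K, sval T (marg P s1 K πb x) (flam r lam) ≤ Qval P s1 r T lam := by
      intro x
      rw [← sval_trunc T (marg P s1 K πb x) (flam r lam)]
      obtain ⟨μ, hμ, hQ, hmax⟩ := exists_Qmax (r := r) hP lam
      rw [← hQ]
      exact hmax _ (isOccT_trunc_marg hP hπb x T)
    have : ∑ x : Fin K, sval T (marg P s1 K πb x) (flam r lam) ≤ K * Qval P s1 r T lam := by
      calc ∑ x : Fin K, sval T (marg P s1 K πb x) (flam r lam)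
          ≤ ∑ _x : Fin K, Qval P s1 r T lam := Finset.sum_le_sum fun x _ => harm x
        _ = K * Qval P s1 r T lam := by
            rw [Finset.sum_const, Finset.card_univ, Fintype.card_fin, nsmul_eq_mul]
    linarith

end MainAux

lemma sum_Icc_one_eq_sum_fin (T : ℕ) (G : ℕ → ℝ) :
    ∑ t ∈ Finset.Icc 1 T, G t = ∑ i : Fin T, G ((i:ℕ)+1) := by
  rw [Fin.sum_univ_eq_sum_range (fun i => G (i+1))]
  induction T with
  | zero => simp
  | succ n ih => rw [Finset.sum_Icc_succ_top (by omega), ih, Finset.sum_range_succ]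

/-- Let `λ* ∈ arg inf_λ P(λ)` and `α = m/K ∈ (0,1]`. Then there exists a
(randomized) Markov policy `π**` for the sub-MDP that is optimal for `Q(λ*)` and satisfies
`E^{π**}[A_t] = α` for every `1 ≤ t ≤ T`. -/
theorem exists_optimal_policy_with_budget
    {S : Type*} [Fintype S] [DecidableEq S]
    (T K m : ℕ) (hK : 0 < K) (hm1 : 1 ≤ m) (hmK : m ≤ K)
    (P : Bool → S → S → ℝ) (hP : IsKernel P) (s1 : S)
    (r : ℕ → S → Bool → ℝ) (hr : ∀ t s a, 0 ≤ r t s a)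
    (lamstar : ℕ → ℝ)
    (hargmin : ∀ lam : ℕ → ℝ,
      lagrangeValue P s1 r T K m lamstar ≤ lagrangeValue P s1 r T K m lam) :
    ∃ πss : S → Bool → ℕ → ℝ, IsPolicy πss ∧
      subValue P s1 r lamstar T πss = Qval P s1 r T lamstar ∧
      ∀ t ∈ Finset.Icc 1 T, ∑ s : S, saDist P s1 πss t s true = (m : ℝ) / K := by
  classical
  have hKpos : (0:ℝ) < K := by exact_mod_cast hK
  have hmin : ∀ lam : ℕ → ℝ,
      (K:ℝ) * Qval P s1 r T lamstar + (∑ t ∈ Finset.Icc 1 T, lamstar t) * m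
      ≤ (K:ℝ) * Qval P s1 r T lam + (∑ t ∈ Finset.Icc 1 T, lam t) * m :=
    fun lam => le_trans (lagrange_ge hP hK m lamstar)
      (le_trans (hargmin lam) (lagrange_le hP hK m lam))
  obtain ⟨μh, hμh, hQh, hmaxh⟩ := exists_Qmax (r := r) hP lamstar
  set fstar := flam r lamstar with hfstar
  set Qstar := Qval P s1 r T lamstar with hQstar
  set O : Set (ℕ → S → Bool → ℝ) :=
    OccSet P s1 T ∩ {μ | sval T μ fstar = Qstar} with hO
  have hμhO : μh ∈ O := ⟨hμh, hQh⟩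
  have hOcomp : IsCompact O := (isCompact_occSet hP T).inter_right
    (isClosed_eq (continuous_sval T fstar) continuous_const)
  have hOconv : Convex ℝ O := by
    intro μ1 h1 μ2 h2 a b ha hb hab
    refine ⟨convex_occSet T h1.1 h2.1 ha hb hab, ?_⟩
    show sval T (a • μ1 + b • μ2) fstar = Qstar
    rw [sval_combo, h1.2, h2.2, ← add_mul, hab, one_mul]
  set hmap : (ℕ → S → Bool → ℝ) → (Fin T → ℝ) := fun μ i => ∑ s : S, μ ((i:ℕ)+1) s true
    with hhmap
  have hmapcont : Continuous hmap := continuous_pi fun i =>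
    continuous_finset_sum _ fun s _ => continuous_eval _ _ _
  have hmaplin : ∀ (a b : ℝ) (μ1 μ2 : ℕ → S → Bool → ℝ),
      hmap (a • μ1 + b • μ2) = a • hmap μ1 + b • hmap μ2 := by
    intro a b μ1 μ2
    funext i
    show ∑ s : S, (a • μ1 + b • μ2) ((i:ℕ)+1) s true = _
    simp only [combo_apply]
    rw [Finset.sum_add_distrib, ← Finset.mul_sum, ← Finset.mul_sum]
    rfl
  have himgconv : Convex ℝ (hmap '' O) := by
    rintro y1 ⟨μ1, h1, rfl⟩ y2 ⟨μ2, h2, rfl⟩ a b ha hb hab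
    exact ⟨a • μ1 + b • μ2, hOconv h1 h2 ha hb hab, hmaplin a b μ1 μ2⟩
  have himgcomp : IsCompact (hmap '' O) := hOcomp.image hmapcont
  set c0 : Fin T → ℝ := fun _ => (m:ℝ)/K with hc0def
  have hc0 : c0 ∈ hmap '' O := by
    by_contra hc0n
    obtain ⟨f, u, hfu, hub⟩ :=
      geometric_hahn_banach_point_closed himgconv himgcomp.isClosed hc0n
    set d : Fin T → ℝ := fun i => f (fun j => if i = j then (1:ℝ) else 0) with hd
    have hrep : ∀ y : Fin T → ℝ, f y = ∑ i : Fin T, y i * d i := by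
      intro y
      conv_lhs => rw [pi_eq_sum_univ y]
      rw [map_sum]
      exact Finset.sum_congr rfl fun i _ => by rw [map_smul, smul_eq_mul]
    set δ := u - f c0 with hδ
    have hδpos : 0 < δ := by rw [hδ]; linarith
    set Fm : (ℕ → S → Bool → ℝ) → ℝ := fun μ => f (hmap μ) with hFm
    have hFcont : Continuous Fm := f.continuous.comp hmapcont
    have hne : (OccSet P s1 T).Nonempty := ⟨μh, hμh⟩
    obtain ⟨μB, hμB, hBmax⟩ := (isCompact_occSet hP T).exists_isMaxOn hne
      hFcont.abs.continuousOn
    obtain ⟨B, hBpos, hFB, hcB⟩ : ∃ B : ℝ, 0 < B ∧ (∀ μ ∈ OccSet P s1 T, |Fm μ| ≤ B) ∧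
        f c0 + δ/2 ≤ B := by
      refine ⟨|Fm μB| + |f c0| + |u| + 1, by positivity, ?_, ?_⟩
      · intro μ hμ
        have h1 : |Fm μ| ≤ |Fm μB| := hBmax hμ
        have h2 : 0 ≤ |f c0| := abs_nonneg _
        have h3 : 0 ≤ |u| := abs_nonneg _
        linarith
      · have h1 : f c0 + δ/2 = (f c0 + u)/2 := by rw [hδ]; ring
        have h2 : f c0 ≤ |f c0| := le_abs_self _
        have h3 : u ≤ |u| := le_abs_self _
        have h4 : 0 ≤ |Fm μB| := abs_nonneg _
        have h5 : 0 ≤ |f c0| := abs_nonneg _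
        have h6 : 0 ≤ |u| := abs_nonneg _
        rw [h1]; linarith
    set D' := OccSet P s1 T ∩ {μ | Fm μ ≤ f c0 + δ/2} with hD'
    have hD'comp : IsCompact D' := (isCompact_occSet hP T).inter_right
      (isClosed_le hFcont continuous_const)
    obtain ⟨γ, hγpos, hγ⟩ : ∃ γ : ℝ, 0 < γ ∧ ∀ μ ∈ D', sval T μ fstar ≤ Qstar - γ := by
      rcases Set.eq_empty_or_nonempty D' with hD0 | hD0
      · exact ⟨1, one_pos, fun μ hμ => by rw [hD0] at hμ; exact absurd hμ (Set.notMem_empty μ)⟩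
      · obtain ⟨μ0, hμ0, hμ0max⟩ := hD'comp.exists_isMaxOn hD0
          (continuous_sval T fstar).continuousOn
        have hle : sval T μ0 fstar ≤ Qstar := by rw [← hQh]; exact hmaxh μ0 hμ0.1
        have hlt : sval T μ0 fstar < Qstar := by
          rcases lt_or_eq_of_le hle with h | h
          · exact h
          · exfalso
            have hO0 : μ0 ∈ O := ⟨hμ0.1, h⟩
            have h1 : u < Fm μ0 := hub _ ⟨μ0, hO0, rfl⟩
            have h2 : Fm μ0 ≤ f c0 + δ/2 := hμ0.2
            rw [hδ] at h2
            linarith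
        refine ⟨Qstar - sval T μ0 fstar, by linarith, fun μ hμ => ?_⟩
        have := hμ0max hμ
        simp only [Set.mem_setOf_eq] at this
        linarith [this]
    obtain ⟨ε, hεpos, hεB⟩ : ∃ ε : ℝ, 0 < ε ∧ ε * B + ε * B = γ :=
      ⟨γ / (2 * B), div_pos hγpos (by linarith), by field_simp; ring⟩
    have hclaim : ∀ μ ∈ OccSet P s1 T,
        sval T μ fstar - ε * Fm μ ≤ Qstar - ε * (f c0 + δ/2) := by
      intro μ hμ
      by_cases hmem : Fm μ ≤ f c0 + δ/2
      · have h1 := hγ μ ⟨hμ, hmem⟩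
        have h2 := abs_le.1 (hFB μ hμ)
        have h4 : ε * -B ≤ ε * Fm μ :=
          mul_le_mul_of_nonneg_left h2.1 (le_of_lt hεpos)
        have h4' : ε * -B = -(ε * B) := by ring
        have h5 : ε * (f c0 + δ/2) ≤ ε * B :=
          mul_le_mul_of_nonneg_left hcB (le_of_lt hεpos)
        linarith
      · push_neg at hmem
        have h1 : sval T μ fstar ≤ Qstar := by rw [← hQh]; exact hmaxh μ hμ
        have h2 : ε * (f c0 + δ/2) ≤ ε * Fm μ :=
          mul_le_mul_of_nonneg_left (le_of_lt hmem) (le_of_lt hεpos)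
        linarith
    set lam' : ℕ → ℝ := fun t => lamstar t +
      ε * (if h : 1 ≤ t ∧ t ≤ T then d ⟨t-1, by omega⟩ else 0) with hlam'
    have hdext : ∀ i : Fin T,
        (if h : 1 ≤ (i:ℕ)+1 ∧ (i:ℕ)+1 ≤ T then d ⟨(i:ℕ)+1-1, by omega⟩ else 0) = d i := by
      intro i
      have hi := i.isLt
      have hfin : (⟨(i:ℕ)+1-1, by omega⟩ : Fin T) = i := Fin.ext (by simp)
      rw [dif_pos ⟨by omega, by omega⟩, hfin]
    have hval : ∀ μ : ℕ → S → Bool → ℝ,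
        sval T μ (flam r lam') = sval T μ fstar - ε * Fm μ := by
      intro μ
      have hrhs : Fm μ = ∑ i : Fin T, hmap μ i * d i := hrep (hmap μ)
      have hterm : ∀ t ∈ Finset.Icc 1 T,
          ∑ s : S, ∑ a : Bool, μ t s a * flam r lam' t s a
          = (∑ s : S, ∑ a : Bool, μ t s a * fstar t s a)
            - ε * ((if h : 1 ≤ t ∧ t ≤ T then d ⟨t-1, by omega⟩ else 0)
              * ∑ s : S, μ t s true) := by
        intro t ht
        have hab : ∀ s : S, ∑ a : Bool, μ t s a * flam r lam' t s a
            = (∑ a : Bool, μ t s a * fstar t s a)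
              - ε * ((if h : 1 ≤ t ∧ t ≤ T then d ⟨t-1, by omega⟩ else 0) * μ t s true) := by
          intro s
          simp only [hfstar, flam, hlam', actVal, Fintype.sum_bool, if_true,
            Bool.false_eq_true, if_false]
          ring
        rw [Finset.sum_congr rfl fun s _ => hab s, Finset.sum_sub_distrib, ← Finset.mul_sum,
          ← Finset.mul_sum]
      show sval T μ (flam r lam') = _
      unfold sval
      rw [Finset.sum_congr rfl hterm, Finset.sum_sub_distrib, ← Finset.mul_sum]
      have hre : ∑ t ∈ Finset.Icc 1 T,
          (if h : 1 ≤ t ∧ t ≤ T then d ⟨t-1, by omega⟩ else 0) * ∑ s : S, μ t s true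
          = ∑ i : Fin T, hmap μ i * d i := by
        rw [sum_Icc_one_eq_sum_fin T (fun t =>
          (if h : 1 ≤ t ∧ t ≤ T then d ⟨t-1, by omega⟩ else 0) * ∑ s : S, μ t s true)]
        refine Finset.sum_congr rfl fun i _ => ?_
        rw [hdext i]
        try exact mul_comm _ _
      rw [hre, ← hrhs]
      try rfl
    obtain ⟨μ', hμ', hQ', hmax'⟩ := exists_Qmax (r := r) hP lam'
    have hQle : Qval P s1 r T lam' ≤ Qstar - ε * (f c0 + δ/2) := by
      rw [← hQ', hval μ']
      exact hclaim μ' hμ'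
    have hsum' : ∑ t ∈ Finset.Icc 1 T, lam' t
        = (∑ t ∈ Finset.Icc 1 T, lamstar t) + ε * ∑ i : Fin T, d i := by
      simp only [hlam']
      rw [Finset.sum_add_distrib, ← Finset.mul_sum]
      congr 2
      rw [sum_Icc_one_eq_sum_fin T (fun t =>
        (if h : 1 ≤ t ∧ t ≤ T then d ⟨t-1, by omega⟩ else 0))]
      exact Finset.sum_congr rfl fun i _ => hdext i
    have hfc0 : f c0 = (m:ℝ)/K * ∑ i : Fin T, d i := by
      rw [hrep c0, Finset.mul_sum]
    have hKfc0 : (K:ℝ) * f c0 = m * ∑ i : Fin T, d i := by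
      rw [hfc0]
      field_simp
    have hfinal := hmin lam'
    rw [hsum'] at hfinal
    have hQ2 : (K:ℝ) * Qval P s1 r T lam' ≤ K * (Qstar - ε * (f c0 + δ/2)) :=
      mul_le_mul_of_nonneg_left hQle (le_of_lt hKpos)
    set X := ∑ i : Fin T, d i with hX
    have hexp : (K:ℝ) * (Qstar - ε * (f c0 + δ/2))
          + ((∑ t ∈ Finset.Icc 1 T, lamstar t) + ε * X) * m
        = K * Qstar + (∑ t ∈ Finset.Icc 1 T, lamstar t) * m
          - K * ε * (δ/2) + ε * ((m:ℝ) * X - K * f c0) := by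
      ring
    have he2 : (m:ℝ) * X - K * f c0 = 0 := by rw [hKfc0]; ring
    rw [he2, mul_zero, add_zero] at hexp
    have hcontr : (0:ℝ) < K * ε * (δ/2) := by positivity
    linarith
  obtain ⟨μss, hμssO, hμssc0⟩ := hc0
  obtain ⟨πss, hπss, hsa⟩ := exists_policy_of_isOccT hP hμssO.1
  refine ⟨πss, hπss, ?_, ?_⟩
  · rw [subValue_eq_sval]
    have heq : sval T (saDist P s1 πss) fstar = sval T μss fstar := by
      refine Finset.sum_congr rfl fun t ht => ?_
      rw [Finset.mem_Icc] at ht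
      exact Finset.sum_congr rfl fun s _ => Finset.sum_congr rfl fun a _ => by
        rw [hsa t ht.1 ht.2 s a]
    rw [heq, hμssO.2]
  · intro t ht
    rw [Finset.mem_Icc] at ht
    rw [Finset.sum_congr rfl fun s (_ : s ∈ univ) => hsa t ht.1 ht.2 s true]
    have h2 := congrFun hμssc0 (⟨t-1, by omega⟩ : Fin T)
    simp only [hhmap, hc0def] at h2
    have ht1 : t - 1 + 1 = t := by omega
    rw [ht1] at h2
    exact h2


end RMAB
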